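/- If A/B is a QF ring extension, then the natural (A, A)-bimodules End(_BA), A ⊗_B A, and End(A_B) are pairwise similar; moreover A ⊗_B A ∼ End(A_B) as (E, A)-bimodules where E = End(A_B). -/

import Mathlib

open scoped TensorProduct

noncomputable section

section Bimod

variable (L R : Type) [Ring L] [Ring R]

def BDiv {M N : Type} [AddCommGroup M] [AddCommGroup N]
    (lM : L → M → M) (rM : M → R → M) (lN : L → N → N) (rN : N → R → N) : Prop :=
  ∃ (n : ℕ) (f : M →+ (Fin n → N)) (g : (Fin n → N) →+ M),
    (∀ (l : L) (m : M), f (lM l m) = fun i => lN l (f m i)) ∧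
    (∀ (m : M) (r : R), f (rM m r) = fun i => rN (f m i) r) ∧
    (∀ (l : L) (v : Fin n → N), g (fun i => lN l (v i)) = lM l (g v)) ∧
    (∀ (v : Fin n → N) (r : R), g (fun i => rN (v i) r) = rM (g v) r) ∧
    ∀ m : M, g (f m) = m

def BSim {M N : Type} [AddCommGroup M] [AddCommGroup N]
    (lM : L → M → M) (rM : M → R → M) (lN : L → N → N) (rN : N → R → N) : Prop :=
  BDiv L R lM rM lN rN ∧ BDiv L R lN rN lM rM

end Bimod

section Ext

variable {R S : Type} [Ring R] [Ring S] (ψ : R →+* S)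

def rdualSub : AddSubgroup (S →+ R) where
  carrier := {h | ∀ (x : S) (r : R), h (x * ψ r) = h x * r}
  add_mem' := by
    intro a b ha hb
    intro x r
    simp only [AddMonoidHom.add_apply, ha x r, hb x r, add_mul]
  zero_mem' := by intro x r; simp
  neg_mem' := by
    intro a ha x r
    simp only [AddMonoidHom.neg_apply, ha x r, neg_mul]

def ldualSub : AddSubgroup (S →+ R) where
  carrier := {h | ∀ (r : R) (x : S), h (ψ r * x) = r * h x}
  add_mem' := by
    intro a b ha hb r x
    simp only [AddMonoidHom.add_apply, ha r x, hb r x, mul_add]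
  zero_mem' := by intro r x; simp
  neg_mem' := by
    intro a ha r x
    simp only [AddMonoidHom.neg_apply, ha r x, mul_neg]

def rdualL (r : R) (h : rdualSub ψ) : rdualSub ψ :=
  ⟨(AddMonoidHom.mulLeft r).comp h.1, by
    intro x r'
    simp only [AddMonoidHom.coe_comp, Function.comp_apply, AddMonoidHom.coe_mulLeft,
      h.2 x r', mul_assoc]⟩

def rdualR (h : rdualSub ψ) (s : S) : rdualSub ψ :=
  ⟨h.1.comp (AddMonoidHom.mulLeft s), by
    intro x r'
    simp only [AddMonoidHom.coe_comp, Function.comp_apply, AddMonoidHom.coe_mulLeft,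
      ← mul_assoc]
    exact h.2 (s * x) r'⟩

def ldualL (s : S) (h : ldualSub ψ) : ldualSub ψ :=
  ⟨h.1.comp (AddMonoidHom.mulRight s), by
    intro r x
    simp only [AddMonoidHom.coe_comp, Function.comp_apply, AddMonoidHom.coe_mulRight,
      mul_assoc]
    exact h.2 r (x * s)⟩

def ldualR (h : ldualSub ψ) (r : R) : ldualSub ψ :=
  ⟨(AddMonoidHom.mulRight r).comp h.1, by
    intro r' x
    simp only [AddMonoidHom.coe_comp, Function.comp_apply, AddMonoidHom.coe_mulRight,
      h.2 r' x, mul_assoc]⟩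

def tensorRel : AddSubgroup (S ⊗[ℤ] S) :=
  AddSubgroup.closure {z | ∃ (x y : S) (r : R),
    z = (x * ψ r) ⊗ₜ[ℤ] y - x ⊗ₜ[ℤ] (ψ r * y)}

def TensorSq := (S ⊗[ℤ] S) ⧸ tensorRel ψ

instance : AddCommGroup (TensorSq ψ) := QuotientAddGroup.Quotient.addCommGroup _

def tmk (x y : S) : TensorSq ψ := QuotientAddGroup.mk (x ⊗ₜ[ℤ] y)

def tL (a : S) : TensorSq ψ →+ TensorSq ψ :=
  QuotientAddGroup.map _ _
    ((TensorProduct.map (AddMonoidHom.mulLeft a).toIntLinearMap LinearMap.id).toAddMonoidHom)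
    (by
      show tensorRel ψ ≤ AddSubgroup.comap _ (tensorRel ψ)
      rw [tensorRel, AddSubgroup.closure_le]
      rintro z ⟨x, y, r, rfl⟩
      simp only [SetLike.mem_coe, AddSubgroup.mem_comap, LinearMap.toAddMonoidHom_coe,
        map_sub, TensorProduct.map_tmul, AddMonoidHom.coe_toIntLinearMap,
        AddMonoidHom.coe_mulLeft, LinearMap.id_coe, id_eq]
      exact AddSubgroup.subset_closure ⟨a * x, y, r, by rw [mul_assoc]⟩)

def tR (a : S) : TensorSq ψ →+ TensorSq ψ :=
  QuotientAddGroup.map _ _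
    ((TensorProduct.map LinearMap.id (AddMonoidHom.mulRight a).toIntLinearMap).toAddMonoidHom)
    (by
      show tensorRel ψ ≤ AddSubgroup.comap _ (tensorRel ψ)
      rw [tensorRel, AddSubgroup.closure_le]
      rintro z ⟨x, y, r, rfl⟩
      simp only [SetLike.mem_coe, AddSubgroup.mem_comap, LinearMap.toAddMonoidHom_coe,
        map_sub, TensorProduct.map_tmul, AddMonoidHom.coe_toIntLinearMap,
        AddMonoidHom.coe_mulRight, LinearMap.id_coe, id_eq]
      exact AddSubgroup.subset_closure ⟨x, y * a, r, by rw [mul_assoc]⟩)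

/-- The multiplication map `S ⊗_R S → S`, `x ⊗ y ↦ x * y`. -/
def tmul' : TensorSq ψ →+ S :=
  QuotientAddGroup.lift _ (LinearMap.mul' ℤ S).toAddMonoidHom
    (by
      intro z hz
      induction hz using AddSubgroup.closure_induction with
      | mem z hz =>
        obtain ⟨x, y, r, rfl⟩ := hz
        simp [mul_assoc]
      | zero => simp
      | add a b _ _ ha hb =>
        simp only [AddMonoidHom.mem_ker, LinearMap.toAddMonoidHom_coe] at ha hb ⊢
        simp [map_add, ha, hb]
      | neg a _ ha =>
        simp only [AddMonoidHom.mem_ker, LinearMap.toAddMonoidHom_coe] at ha ⊢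
        simp [ha])

end Ext


section ExtEnd

variable {R S : Type} [Ring R] [Ring S] (ψ : R →+* S)

/-- `End(S_R)`: additive endomorphisms of `S` commuting with the right `R`-action
(along `ψ`), as a subring of `AddMonoid.End S`. -/
def endR : Subring (AddMonoid.End S) where
  carrier := {e | ∀ (x : S) (r : R), e (x * ψ r) = e x * ψ r}
  mul_mem' := by
    intro a b ha hb x r
    show a (b (x * ψ r)) = a (b x) * ψ r
    rw [hb, ha]
  one_mem' := by intro x r; rfl
  add_mem' := by
    intro a b ha hb x r
    show a (x * ψ r) + b (x * ψ r) = (a x + b x) * ψ r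
    rw [ha, hb, add_mul]
  zero_mem' := by
    intro x r
    show (0 : S) = 0 * ψ r
    rw [zero_mul]
  neg_mem' := by
    intro a ha x r
    show -(a (x * ψ r)) = -(a x) * ψ r
    rw [ha, neg_mul]

/-- `End(_RS)`: additive endomorphisms of `S` commuting with the left `R`-action
(along `ψ`), as a subring of `AddMonoid.End S`. -/
def endL : Subring (AddMonoid.End S) where
  carrier := {e | ∀ (r : R) (x : S), e (ψ r * x) = ψ r * e x}
  mul_mem' := by
    intro a b ha hb r x
    show a (b (ψ r * x)) = ψ r * a (b x)
    rw [hb, ha]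
  one_mem' := by intro r x; rfl
  add_mem' := by
    intro a b ha hb r x
    show a (ψ r * x) + b (ψ r * x) = ψ r * (a x + b x)
    rw [ha, hb, mul_add]
  zero_mem' := by
    intro r x
    show (0 : S) = ψ r * 0
    rw [mul_zero]
  neg_mem' := by
    intro a ha r x
    show -(a (ψ r * x)) = ψ r * -(a x)
    rw [ha, mul_neg]

/-- The left regular representation `λ : S → End(S_R)`, `s ↦ (x ↦ s * x)`. -/
def lam : S →+* endR ψ where
  toFun s := ⟨(AddMonoidHom.mulLeft s : S →+ S), by
    intro x r
    show s * (x * ψ r) = s * x * ψ r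
    rw [mul_assoc]⟩
  map_one' := by
    apply Subtype.ext
    refine AddMonoidHom.ext fun x => ?_
    show (1 : S) * x = x
    rw [one_mul]
  map_mul' s t := by
    apply Subtype.ext
    refine AddMonoidHom.ext fun x => ?_
    show (s * t) * x = s * (t * x)
    rw [mul_assoc]
  map_zero' := by
    apply Subtype.ext
    refine AddMonoidHom.ext fun x => ?_
    show (0 : S) * x = 0
    rw [zero_mul]
  map_add' s t := by
    apply Subtype.ext
    refine AddMonoidHom.ext fun x => ?_
    show (s + t) * x = s * x + t * x
    rw [add_mul]

/-- Right multiplication `ρ : S → End(_RS)`, `s ↦ (x ↦ x * s)`. -/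
def rho (s : S) : endL ψ :=
  ⟨(AddMonoidHom.mulRight s : S →+ S), by
    intro r x
    show (ψ r * x) * s = ψ r * (x * s)
    rw [mul_assoc]⟩

/-- Left `S`-action on `End(_RS)`: `(x · f)(z) = f (z * x)`. -/
def endLL (x : S) (f : endL ψ) : endL ψ :=
  ⟨(f.1 : S →+ S).comp (AddMonoidHom.mulRight x), by
    intro r z
    show (f.1 : S →+ S) ((ψ r * z) * x) = ψ r * (f.1 : S →+ S) (z * x)
    rw [mul_assoc]
    exact f.2 r (z * x)⟩

/-- Right `S`-action on `End(_RS)`: `(f · y)(z) = f z * y`. -/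
def endLR (f : endL ψ) (y : S) : endL ψ :=
  ⟨(AddMonoidHom.mulRight y).comp (f.1 : S →+ S), by
    intro r z
    show (f.1 : S →+ S) (ψ r * z) * y = ψ r * ((f.1 : S →+ S) z * y)
    rw [f.2 r z, mul_assoc]⟩

end ExtEnd

section QF

variable {B A : Type} [Ring B] [Ring A] (φ : B →+* A)

/-- `φ : B → A` is a left QF-extension: `_B A` is finitely generated projective and `A`
divides `(_B A)* = Hom_{B-}(A,B)` as `(A,B)`-bimodules. -/
def IsLeftQF : Prop :=
  (letI : Module B A := Module.compHom A φ
   Module.Finite B A ∧ Module.Projective B A) ∧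
  BDiv A B (fun a x => a * x) (fun x b => x * φ b) (ldualL φ) (ldualR φ)

/-- `φ : B → A` is a right QF-extension: `A_B` is finitely generated projective and `A`
divides `(A_B)* = Hom_{-B}(A,B)` as `(B,A)`-bimodules. -/
def IsRightQF : Prop :=
  (letI : Module Bᵐᵒᵖ A := Module.compHom A φ.op
   Module.Finite Bᵐᵒᵖ A ∧ Module.Projective Bᵐᵒᵖ A) ∧
  BDiv B A (fun b x => φ b * x) (fun x a => x * a) (rdualL φ) (rdualR φ)

/-- `φ : B → A` is a QF extension: both a left and a right QF extension. -/
def IsQFExt : Prop := IsLeftQF φ ∧ IsRightQF φ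

end QF


section ETensor

variable {B A : Type} [Ring B] [Ring A] (φ : B →+* A)

/-- Left action of `E = End(A_B)` on `A ⊗_B A` via the first factor. -/
def endRTmulL (e : endR φ) : TensorSq φ →+ TensorSq φ :=
  QuotientAddGroup.map _ _
    ((TensorProduct.map ((e.1 : A →+ A)).toIntLinearMap LinearMap.id).toAddMonoidHom)
    (by
      show tensorRel φ ≤ AddSubgroup.comap _ (tensorRel φ)
      rw [tensorRel, AddSubgroup.closure_le]
      rintro z ⟨x, y, b, rfl⟩
      simp only [SetLike.mem_coe, AddSubgroup.mem_comap, LinearMap.toAddMonoidHom_coe,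
        map_sub, TensorProduct.map_tmul, AddMonoidHom.coe_toIntLinearMap,
        LinearMap.id_coe, id_eq]
      apply AddSubgroup.subset_closure
      exact ⟨(e.1 : A →+ A) x, y, b,
        congrArg (fun t : A => t ⊗ₜ[ℤ] y - (e.1 : A →+ A) x ⊗ₜ[ℤ] (φ b * y)) (e.2 x b)⟩)

end ETensor


/-!
If `A_B` is finitely generated projective with dual basis `(xⱼ, hⱼ)`, then
`End(A_B) ≅ A ⊗_B (A_B)*` as `(End(A_B), A)`-bimodules, via `x ⊗ h ↦ x · φ ∘ h` with inverse
`e ↦ ∑ⱼ e(xⱼ) ⊗ hⱼ`; that the inverse is right `A`-linear says that `∑ⱼ xⱼ ⊗ hⱼ` commutes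
with `A`.
Applying `A ⊗_B -` to a splitting of `A ∣ (A_B)*`, resp. of `(A_B)* ∣ A`, therefore gives
`A ⊗_B A ∣ End(A_B)`, resp. `End(A_B) ∣ A ⊗_B A`. Mirror-symmetrically
`End(_BA) ≅ (_BA)* ⊗_B A`, and `End(_BA) ∼ End(A_B)` follows by transitivity.

Each QF hypothesis supplies only one of the two divisions `A ∣ (A_B)*`, `A ∣ (_BA)*`. The missing
`(A_B)* ∣ A` is the transpose of a splitting `A ⇄ (_BA)*`: `u : A → (_BA)*` transposes to
`a ↦ (z ↦ u z a)`, and `v : (_BA)* → A` transposes to a map into `(_BA)**`, which is `A` again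
because `_BA` is finitely generated projective.
-/

section Division

variable {L L' R M N P : Type} [AddCommGroup M] [AddCommGroup N] [AddCommGroup P]
  {lM : L → M → M} {rM : M → R → M} {lN : L → N → N} {rN : N → R → N}
  {lP : L → P → P} {rP : P → R → P}

variable (lM rM lN rN) in
def IsBimodHom (f : M →+ N) : Prop :=
  (∀ l m, f (lM l m) = lN l (f m)) ∧ ∀ m r, f (rM m r) = rN (f m) r

theorem BDiv.exists_sum (hlN : ∀ l, lN l 0 = 0) (hrN : ∀ r, rN 0 r = 0)
    (h : BDiv L R lM rM lN rN) :
    ∃ (n : ℕ) (f : Fin n → M →+ N) (g : Fin n → N →+ M),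
      (∀ i, IsBimodHom lM rM lN rN (f i)) ∧ (∀ i, IsBimodHom lN rN lM rM (g i)) ∧
        ∀ m, ∑ i, g i (f i m) = m := by
  obtain ⟨n, f, g, hfl, hfr, hgl, hgr, hgf⟩ := h
  refine ⟨n, fun i => (Pi.evalAddMonoidHom _ i).comp f,
    fun i => g.comp (AddMonoidHom.single (fun _ => N) i),
    fun i => ⟨fun l m => by simp [hfl], fun m r => by simp [hfr]⟩,
    fun i => ⟨fun l x => ?_, fun x r => ?_⟩, fun m => ?_⟩
  · simpa [Pi.apply_single (fun _ => lN l) (fun _ => hlN l)] using hgl l (Pi.single i x)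
  · simpa [Pi.apply_single (fun _ y => rN y r) (fun _ => hrN r)] using hgr (Pi.single i x) r
  · simp [← map_sum, Finset.univ_sum_single, hgf]

theorem BDiv.of_sum (hlM : ∀ l x y, lM l (x + y) = lM l x + lM l y)
    (hrM : ∀ x y r, rM (x + y) r = rM x r + rM y r) {n : ℕ} (f : Fin n → M →+ N)
    (g : Fin n → N →+ M) (hf : ∀ i, IsBimodHom lM rM lN rN (f i))
    (hg : ∀ i, IsBimodHom lN rN lM rM (g i)) (hgf : ∀ m, ∑ i, g i (f i m) = m) :
    BDiv L R lM rM lN rN := by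
  refine ⟨n, AddMonoidHom.pi f, ∑ i, (g i).comp (Pi.evalAddMonoidHom _ i),
    fun l m => funext fun i => (hf i).1 l m, fun m r => funext fun i => (hf i).2 m r,
    fun l v => ?_, fun v r => ?_, fun m => by simpa using hgf m⟩
  · simp only [AddMonoidHom.finsetSum_apply, AddMonoidHom.comp_apply, Pi.evalAddMonoidHom_apply,
      (hg _).1]
    exact (map_sum (AddMonoidHom.mk' (lM l) (hlM l)) _ _).symm
  · simp only [AddMonoidHom.finsetSum_apply, AddMonoidHom.comp_apply, Pi.evalAddMonoidHom_apply,
      (hg _).2]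
    exact (map_sum (AddMonoidHom.mk' (rM · r) (hrM · · r)) _ _).symm

theorem BDiv.trans (h₁ : BDiv L R lM rM lN rN) (h₂ : BDiv L R lN rN lP rP) :
    BDiv L R lM rM lP rP := by
  obtain ⟨n, f, g, hfl, hfr, hgl, hgr, hgf⟩ := h₁
  obtain ⟨m, f', g', hfl', hfr', hgl', hgr', hgf'⟩ := h₂
  let e : Fin n × Fin m ≃ Fin (n * m) := finProdFinEquiv
  refine ⟨n * m,
    AddMonoidHom.pi fun k => (Pi.evalAddMonoidHom _ (e.symm k).2).comp
      (f'.comp ((Pi.evalAddMonoidHom _ (e.symm k).1).comp f)),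
    AddMonoidHom.mk' (fun v => g fun i => g' fun j => v (e (i, j))) fun v w => by
      rw [← map_add]; congr 1; funext i; rw [Pi.add_apply, ← map_add]; rfl,
    fun l x => ?_, fun x r => ?_, fun l v => ?_, fun v r => ?_, fun x => ?_⟩
  · funext k; simp [hfl, hfl']
  · funext k; simp [hfr, hfr']
  · simp only [AddMonoidHom.mk'_apply, hgl', hgl]
  · simp only [AddMonoidHom.mk'_apply, hgr', hgr]
  · simp [hgf, hgf']

theorem BDiv.restrictLeft (σ : L' → L) {lM' : L' → M → M} {lN' : L' → N → N}
    (hM : ∀ l m, lM' l m = lM (σ l) m) (hN : ∀ l n, lN' l n = lN (σ l) n)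
    (h : BDiv L R lM rM lN rN) : BDiv L' R lM' rM lN' rN := by
  obtain ⟨n, f, g, hfl, hfr, hgl, hgr, hgf⟩ := h
  refine ⟨n, f, g, fun l m => ?_, hfr, fun l v => ?_, hgr, hgf⟩
  · simp only [hM, hN, hfl]
  · simp only [hM, hN, hgl]

end Division

@[simp]
theorem AddMonoid.End.add_apply {M : Type*} [AddCommMonoid M] (f g : AddMonoid.End M) (m : M) :
    (f + g) m = f m + g m := rfl

@[simp]
theorem AddMonoid.End.finsetSum_apply {M ι : Type*} [AddCommMonoid M] (s : Finset ι)
    (f : ι → AddMonoid.End M) (m : M) : (∑ i ∈ s, f i) m = ∑ i ∈ s, f i m :=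
  AddMonoidHom.finsetSum_apply f s m

theorem Module.exists_dual_basis (R M : Type*) [Semiring R] [AddCommMonoid M] [Module R M]
    [Module.Finite R M] [Module.Projective R M] :
    ∃ (n : ℕ) (x : Fin n → M) (h : Fin n → M →ₗ[R] R), ∀ m, ∑ j, h j m • x j = m := by
  obtain ⟨n, f, g, -, -, hfg⟩ := Module.Finite.exists_comp_eq_id_of_projective R M
  refine ⟨n, fun j => f fun k => if j = k then 1 else 0, fun j => LinearMap.proj j ∘ₗ g,
    fun m => ?_⟩
  simpa [← LinearMap.pi_apply_eq_sum_univ] using LinearMap.congr_fun hfg m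

namespace TensorSq

variable {B A C : Type} [Ring B] [Ring A] [AddCommGroup C] {φ : B →+* A}

variable (φ) in
def mk : A →+ A →+ TensorSq φ :=
  (LinearMap.toAddMonoidHom'.comp (TensorProduct.mk ℤ A A).toAddMonoidHom).compr₂
    (QuotientAddGroup.mk' (tensorRel φ))

theorem mk_mul_map (x : A) (b : B) (y : A) : mk φ (x * φ b) y = mk φ x (φ b * y) :=
  (QuotientAddGroup.eq_iff_sub_mem ..).2 (AddSubgroup.subset_closure ⟨x, y, b, rfl⟩)

@[elab_as_elim]
theorem induction_on {p : TensorSq φ → Prop} (t : TensorSq φ) (zero : p 0)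
    (mk : ∀ x y, p (mk φ x y)) (add : ∀ s t, p s → p t → p (s + t)) : p t := by
  obtain ⟨t, rfl⟩ := QuotientAddGroup.mk_surjective t
  induction t using TensorProduct.induction_on with
  | zero => exact zero
  | tmul x y => exact mk x y
  | add s t hs ht => exact add _ _ hs ht

def lift (F : A →+ A →+ C) (hF : ∀ x b y, F (x * φ b) y = F x (φ b * y)) : TensorSq φ →+ C :=
  QuotientAddGroup.lift _ (TensorProduct.liftAddHom F fun n x y => by
      rw [map_zsmul, AddMonoidHom.smul_apply, map_zsmul])
    ((AddSubgroup.closure_le _).2 <| by rintro _ ⟨x, y, b, rfl⟩; simp [hF])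

@[simp]
theorem lift_mk (F : A →+ A →+ C) (hF : ∀ x b y, F (x * φ b) y = F x (φ b * y)) (x y : A) :
    lift F hF (mk φ x y) = F x y :=
  rfl

end TensorSq

section TensorSqActions

variable {B A : Type} [Ring B] [Ring A] {φ : B →+* A}

@[simp]
theorem tL_mk (a x y : A) : tL φ a (TensorSq.mk φ x y) = TensorSq.mk φ (a * x) y := rfl

@[simp]
theorem tR_mk (a x y : A) : tR φ a (TensorSq.mk φ x y) = TensorSq.mk φ x (y * a) := rfl

@[simp]
theorem endRTmulL_mk (e : endR φ) (x y : A) :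
    endRTmulL φ e (TensorSq.mk φ x y) = TensorSq.mk φ (e.1 x) y := rfl

theorem endRTmulL_lam (a : A) (t : TensorSq φ) : endRTmulL φ (lam φ a) t = tL φ a t := by
  induction t using TensorSq.induction_on with
  | zero => simp
  | mk x y => rfl
  | add s t hs ht => simp [hs, ht]

end TensorSqActions

section RightDual

variable {B A : Type} [Ring B] [Ring A] (φ : B →+* A)

@[simp] theorem rdualL_apply (b : B) (h : rdualSub φ) (z : A) :
    (rdualL φ b h).1 z = b * h.1 z := rfl

@[simp] theorem rdualR_apply (h : rdualSub φ) (a z : A) : (rdualR φ h a).1 z = h.1 (a * z) := rfl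

@[simp] theorem lam_apply (a z : A) : (lam φ a).1 z = a * z := rfl

@[simp] theorem rdualSub_apply_mul_map (h : rdualSub φ) (x : A) (b : B) :
    h.1 (x * φ b) = h.1 x * b := h.2 x b

@[simp] theorem endR_apply_mul_map (e : endR φ) (x : A) (b : B) :
    e.1 (x * φ b) = e.1 x * φ b := e.2 x b

theorem rdualL_add (b : B) (h h' : rdualSub φ) :
    rdualL φ b (h + h') = rdualL φ b h + rdualL φ b h' := by
  ext; simp [mul_add]

theorem rdualR_add (h h' : rdualSub φ) (a : A) :
    rdualR φ (h + h') a = rdualR φ h a + rdualR φ h' a := by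
  ext; simp

theorem rdualL_zero (b : B) : rdualL φ b 0 = 0 := by ext; simp

theorem rdualR_zero (a : A) : rdualR φ 0 a = 0 := by ext; simp

theorem exists_rdualBasis
    (h : letI : Module Bᵐᵒᵖ A := Module.compHom A φ.op
      Module.Finite Bᵐᵒᵖ A ∧ Module.Projective Bᵐᵒᵖ A) :
    ∃ (n : ℕ) (xb : Fin n → A) (hb : Fin n → rdualSub φ),
      ∀ a, ∑ j, xb j * φ ((hb j).1 a) = a := by
  let _ : Module Bᵐᵒᵖ A := Module.compHom A φ.op
  obtain ⟨hfin, hproj⟩ := h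
  obtain ⟨n, x, f, hxf⟩ := Module.exists_dual_basis Bᵐᵒᵖ A
  refine ⟨n, x, fun j => ⟨(MulOpposite.opAddEquiv (α := B)).symm.toAddMonoidHom.comp
    (f j).toAddMonoidHom, fun z b => congrArg MulOpposite.unop ((f j).map_smul (.op b) z)⟩, hxf⟩

def rdualToEndR : rdualSub φ →+ endR φ where
  toFun h := ⟨φ.toAddMonoidHom.comp h.1, fun x b =>
    show φ (h.1 (x * φ b)) = φ (h.1 x) * φ b by rw [rdualSub_apply_mul_map, map_mul]⟩
  map_zero' := by ext; exact map_zero φ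
  map_add' h h' := by ext; exact map_add φ _ _

@[simp] theorem rdualToEndR_apply (h : rdualSub φ) (z : A) :
    (rdualToEndR φ h).1 z = φ (h.1 z) := rfl

theorem rdualToEndR_rdualL (b : B) (h : rdualSub φ) :
    rdualToEndR φ (rdualL φ b h) = lam φ (φ b) * rdualToEndR φ h := by
  ext; simp

theorem rdualToEndR_rdualR (h : rdualSub φ) (a : A) :
    rdualToEndR φ (rdualR φ h a) = rdualToEndR φ h * lam φ a := by
  ext; simp

theorem mul_lam_mul_rdualToEndR (e : endR φ) (x : A) (h : rdualSub φ) :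
    e * (lam φ x * rdualToEndR φ h) = lam φ (e.1 x) * rdualToEndR φ h := by
  ext z; exact e.2 x (h.1 z)

variable {φ} {ι : Type} [Fintype ι] {xb : ι → A} {hb : ι → rdualSub φ}

theorem rdual_eq_sum_rdualL (hxh : ∀ a, ∑ j, xb j * φ ((hb j).1 a) = a) (h : rdualSub φ) :
    ∑ j, rdualL φ (h.1 (xb j)) (hb j) = h := by
  ext z
  conv_rhs => rw [← hxh z]
  simp

theorem endR_eq_sum_lam_mul (hxh : ∀ a, ∑ j, xb j * φ ((hb j).1 a) = a) (e : endR φ) :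
    ∑ j, lam φ (e.1 (xb j)) * rdualToEndR φ (hb j) = e := by
  ext z
  conv_rhs => rw [← hxh z]
  simp

/-- `∑ⱼ xⱼ ⊗ hⱼ ∈ A ⊗_B (A_B)*` commutes with `A`. -/
theorem sum_mul_rdualBasis {C : Type} [AddCommGroup C]
    (hxh : ∀ a, ∑ j, xb j * φ ((hb j).1 a) = a) (Ψ : A →+ rdualSub φ →+ C)
    (hΨ : ∀ x b h, Ψ (x * φ b) h = Ψ x (rdualL φ b h)) (a : A) :
    ∑ j, Ψ (a * xb j) (hb j) = ∑ j, Ψ (xb j) (rdualR φ (hb j) a) := calc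
  _ = ∑ j, Ψ (∑ k, xb k * φ ((hb k).1 (a * xb j))) (hb j) := by simp only [hxh]
  _ = ∑ k, Ψ (xb k) (∑ j, rdualL φ ((rdualR φ (hb k) a).1 (xb j)) (hb j)) := by
    simp only [map_sum, AddMonoidHom.finsetSum_apply, hΨ, rdualR_apply]
    exact Finset.sum_comm
  _ = _ := by simp only [rdual_eq_sum_rdualL hxh]

end RightDual

section EndRTensorSq

open TensorSq

variable {B A : Type} [Ring B] [Ring A] {φ : B →+* A}
  {ι : Type} [Fintype ι] {xb : ι → A} {hb : ι → rdualSub φ}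

variable (φ) in
/-- `1 ⊗ u : A ⊗_B A → A ⊗_B (A_B)*` followed by `A ⊗_B (A_B)* ≅ End(A_B)`. -/
def tensorSqToEndR (u : A →+ rdualSub φ) (hu : ∀ b x, u (φ b * x) = rdualL φ b (u x)) :
    TensorSq φ →+ endR φ :=
  lift ((AddMonoidHom.mul.comp (lam φ).toAddMonoidHom).compl₂ ((rdualToEndR φ).comp u))
    fun x b y => by simp [hu, rdualToEndR_rdualL, mul_assoc]

variable {u : A →+ rdualSub φ} {hu : ∀ b x, u (φ b * x) = rdualL φ b (u x)}

@[simp] theorem tensorSqToEndR_mk (x y : A) :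
    tensorSqToEndR φ u hu (mk φ x y) = lam φ x * rdualToEndR φ (u y) := by
  simp [tensorSqToEndR]

theorem tensorSqToEndR_endRTmulL (e : endR φ) (t : TensorSq φ) :
    tensorSqToEndR φ u hu (endRTmulL φ e t) = e * tensorSqToEndR φ u hu t := by
  induction t using TensorSq.induction_on with
  | zero => simp
  | mk x y => simp [mul_lam_mul_rdualToEndR]
  | add s t hs ht => simp [hs, ht, mul_add]

theorem tensorSqToEndR_tR (hu' : ∀ x a, u (x * a) = rdualR φ (u x) a) (t : TensorSq φ) (a : A) :
    tensorSqToEndR φ u hu (tR φ a t) = tensorSqToEndR φ u hu t * lam φ a := by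
  induction t using TensorSq.induction_on with
  | zero => simp
  | mk x y => simp [hu', rdualToEndR_rdualR, mul_assoc]
  | add s t hs ht => simp [hs, ht, add_mul]

variable (xb hb) in
/-- `End(A_B) ≅ A ⊗_B (A_B)*` followed by `1 ⊗ v : A ⊗_B (A_B)* → A ⊗_B A`. -/
def endRToTensorSq (v : rdualSub φ →+ A) : endR φ →+ TensorSq φ where
  toFun e := ∑ j, mk φ (e.1 (xb j)) (v (hb j))
  map_zero' := by simp
  map_add' e e' := by simp [Finset.sum_add_distrib]

variable {v : rdualSub φ →+ A}

theorem endRToTensorSq_mul (e' e : endR φ) :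
    endRToTensorSq xb hb v (e' * e) = endRTmulL φ e' (endRToTensorSq xb hb v e) := by
  simp [endRToTensorSq]

theorem endRToTensorSq_mul_lam (hxh : ∀ a, ∑ j, xb j * φ ((hb j).1 a) = a)
    (hv : ∀ b h, v (rdualL φ b h) = φ b * v h) (hv' : ∀ h a, v (rdualR φ h a) = v h * a)
    (e : endR φ) (a : A) :
    endRToTensorSq xb hb v (e * lam φ a) = tR φ a (endRToTensorSq xb hb v e) := by
  -- `e.1` is rebundled because `simp` does not see through `AddMonoid.End A = (A →+ A)`.
  simpa [endRToTensorSq, hv'] using sum_mul_rdualBasis hxh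
    (((mk φ).comp (AddMonoidHom.mk' e.1 (map_add e.1))).compl₂ v)
    (fun x b h => by simp [hv, mk_mul_map]) a

theorem endRToTensorSq_tensorSqToEndR_mk (hxh : ∀ a, ∑ j, xb j * φ ((hb j).1 a) = a)
    (hv : ∀ b h, v (rdualL φ b h) = φ b * v h) (x y : A) :
    endRToTensorSq xb hb v (tensorSqToEndR φ u hu (mk φ x y)) = mk φ x (v (u y)) := by
  conv_rhs => rw [← rdual_eq_sum_rdualL hxh (u y)]
  simp [endRToTensorSq, mk_mul_map, hv]

theorem tensorSqToEndR_endRToTensorSq (e : endR φ) :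
    tensorSqToEndR φ u hu (endRToTensorSq xb hb v e) =
      ∑ j, lam φ (e.1 (xb j)) * rdualToEndR φ (u (v (hb j))) := by
  simp [endRToTensorSq]

end EndRTensorSq

section LeftDual

variable {B A : Type} [Ring B] [Ring A] (φ : B →+* A)

@[simp] theorem ldualL_apply (a : A) (g : ldualSub φ) (z : A) :
    (ldualL φ a g).1 z = g.1 (z * a) := rfl

@[simp] theorem ldualR_apply (g : ldualSub φ) (b : B) (z : A) :
    (ldualR φ g b).1 z = g.1 z * b := rfl

@[simp] theorem rho_apply (a z : A) : (rho φ a).1 z = z * a := rfl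

@[simp] theorem ldualSub_apply_map_mul (g : ldualSub φ) (b : B) (x : A) :
    g.1 (φ b * x) = b * g.1 x := g.2 b x

@[simp] theorem endL_apply_map_mul (e : endL φ) (b : B) (x : A) :
    e.1 (φ b * x) = φ b * e.1 x := e.2 b x

theorem ldualL_add (a : A) (g g' : ldualSub φ) :
    ldualL φ a (g + g') = ldualL φ a g + ldualL φ a g' := by
  ext; simp

theorem ldualR_add (g g' : ldualSub φ) (b : B) :
    ldualR φ (g + g') b = ldualR φ g b + ldualR φ g' b := by
  ext; simp [add_mul]

theorem ldualL_zero (a : A) : ldualL φ a 0 = 0 := by ext; simp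

theorem ldualR_zero (b : B) : ldualR φ 0 b = 0 := by ext; simp

theorem exists_ldualBasis
    (h : letI : Module B A := Module.compHom A φ
      Module.Finite B A ∧ Module.Projective B A) :
    ∃ (n : ℕ) (yb : Fin n → A) (gb : Fin n → ldualSub φ),
      ∀ a, ∑ k, φ ((gb k).1 a) * yb k = a := by
  let _ : Module B A := Module.compHom A φ
  obtain ⟨hfin, hproj⟩ := h
  obtain ⟨n, y, f, hyf⟩ := Module.exists_dual_basis B A
  exact ⟨n, y, fun k => ⟨(f k).toAddMonoidHom, (f k).map_smul⟩, hyf⟩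

def rhoHom : A →+ endL φ where
  toFun := rho φ
  map_zero' := by ext; simp
  map_add' x y := by ext; simp [mul_add]

@[simp] theorem rhoHom_apply (a : A) : rhoHom φ a = rho φ a := rfl

theorem rho_mul (x y : A) : rho φ (x * y) = rho φ y * rho φ x := by
  ext; simp [mul_assoc]

theorem endLL_eq_mul_rho (x : A) (f : endL φ) : endLL φ x f = f * rho φ x := rfl

theorem endLR_eq_rho_mul (f : endL φ) (y : A) : endLR φ f y = rho φ y * f := rfl

def ldualToEndL : ldualSub φ →+ endL φ where
  toFun g := ⟨φ.toAddMonoidHom.comp g.1, fun b x =>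
    show φ (g.1 (φ b * x)) = φ b * φ (g.1 x) by rw [ldualSub_apply_map_mul, map_mul]⟩
  map_zero' := by ext; exact map_zero φ
  map_add' g g' := by ext; exact map_add φ _ _

@[simp] theorem ldualToEndL_apply (g : ldualSub φ) (z : A) :
    (ldualToEndL φ g).1 z = φ (g.1 z) := rfl

theorem ldualToEndL_ldualR (g : ldualSub φ) (b : B) :
    ldualToEndL φ (ldualR φ g b) = rho φ (φ b) * ldualToEndL φ g := by
  ext; simp

theorem ldualToEndL_ldualL (a : A) (g : ldualSub φ) :
    ldualToEndL φ (ldualL φ a g) = ldualToEndL φ g * rho φ a := by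
  ext; simp

variable {φ} {κ : Type} [Fintype κ] {yb : κ → A} {gb : κ → ldualSub φ}

theorem ldual_eq_sum_ldualR (hyg : ∀ a, ∑ k, φ ((gb k).1 a) * yb k = a) (g : ldualSub φ) :
    ∑ k, ldualR φ (gb k) (g.1 (yb k)) = g := by
  ext z
  conv_rhs => rw [← hyg z]
  simp

theorem endL_eq_sum_rho_mul (hyg : ∀ a, ∑ k, φ ((gb k).1 a) * yb k = a) (e : endL φ) :
    ∑ k, rho φ (e.1 (yb k)) * ldualToEndL φ (gb k) = e := by
  ext z
  conv_rhs => rw [← hyg z]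
  simp

/-- `∑ₖ gₖ ⊗ yₖ ∈ (_BA)* ⊗_B A` commutes with `A`. -/
theorem sum_ldualBasis_mul {C : Type} [AddCommGroup C]
    (hyg : ∀ a, ∑ k, φ ((gb k).1 a) * yb k = a) (Ψ : ldualSub φ →+ A →+ C)
    (hΨ : ∀ g b y, Ψ (ldualR φ g b) y = Ψ g (φ b * y)) (a : A) :
    ∑ k, Ψ (ldualL φ a (gb k)) (yb k) = ∑ k, Ψ (gb k) (yb k * a) := calc
  _ = ∑ k, Ψ (∑ s, ldualR φ (gb s) ((ldualL φ a (gb k)).1 (yb s))) (yb k) := by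
    simp only [ldual_eq_sum_ldualR hyg]
  _ = ∑ s, Ψ (gb s) (∑ k, φ ((gb k).1 (yb s * a)) * yb k) := by
    simp only [map_sum, AddMonoidHom.finsetSum_apply, hΨ, ldualL_apply]
    exact Finset.sum_comm
  _ = _ := by simp only [hyg]

end LeftDual

section EndLTensorSq

open TensorSq

variable {B A : Type} [Ring B] [Ring A] {φ : B →+* A}
  {κ : Type} [Fintype κ] {yb : κ → A} {gb : κ → ldualSub φ}

variable (φ) in
/-- `u ⊗ 1 : A ⊗_B A → (_BA)* ⊗_B A` followed by `(_BA)* ⊗_B A ≅ End(_BA)`. -/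
def tensorSqToEndL (u : A →+ ldualSub φ) (hu : ∀ x b, u (x * φ b) = ldualR φ (u x) b) :
    TensorSq φ →+ endL φ :=
  lift ((AddMonoidHom.mul.comp (rhoHom φ)).compl₂ ((ldualToEndL φ).comp u)).flip
    fun x b y => by simp [hu, ldualToEndL_ldualR, rho_mul, mul_assoc]

variable {u : A →+ ldualSub φ} {hu : ∀ x b, u (x * φ b) = ldualR φ (u x) b}

@[simp] theorem tensorSqToEndL_mk (x y : A) :
    tensorSqToEndL φ u hu (mk φ x y) = rho φ y * ldualToEndL φ (u x) := by
  simp [tensorSqToEndL]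

theorem tensorSqToEndL_tL (hu' : ∀ a x, u (a * x) = ldualL φ a (u x)) (a : A) (t : TensorSq φ) :
    tensorSqToEndL φ u hu (tL φ a t) = endLL φ a (tensorSqToEndL φ u hu t) := by
  induction t using TensorSq.induction_on with
  | zero => simp [endLL_eq_mul_rho]
  | mk x y => simp [hu', ldualToEndL_ldualL, endLL_eq_mul_rho, mul_assoc]
  | add s t hs ht => simp [hs, ht, endLL_eq_mul_rho, add_mul]

theorem tensorSqToEndL_tR (t : TensorSq φ) (a : A) :
    tensorSqToEndL φ u hu (tR φ a t) = endLR φ (tensorSqToEndL φ u hu t) a := by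
  induction t using TensorSq.induction_on with
  | zero => simp [endLR_eq_rho_mul]
  | mk x y => simp [rho_mul, endLR_eq_rho_mul, mul_assoc]
  | add s t hs ht => simp [hs, ht, endLR_eq_rho_mul, mul_add]

variable (yb gb) in
/-- `End(_BA) ≅ (_BA)* ⊗_B A` followed by `v ⊗ 1 : (_BA)* ⊗_B A → A ⊗_B A`. -/
def endLToTensorSq (v : ldualSub φ →+ A) : endL φ →+ TensorSq φ where
  toFun e := ∑ k, mk φ (v (gb k)) (e.1 (yb k))
  map_zero' := by simp
  map_add' e e' := by simp [Finset.sum_add_distrib]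

variable {v : ldualSub φ →+ A}

theorem endLToTensorSq_endLR (e : endL φ) (a : A) :
    endLToTensorSq yb gb v (endLR φ e a) = tR φ a (endLToTensorSq yb gb v e) := by
  simp [endLToTensorSq, endLR_eq_rho_mul]

theorem endLToTensorSq_endLL (hyg : ∀ a, ∑ k, φ ((gb k).1 a) * yb k = a)
    (hv : ∀ a g, v (ldualL φ a g) = a * v g) (hv' : ∀ g b, v (ldualR φ g b) = v g * φ b)
    (a : A) (e : endL φ) :
    endLToTensorSq yb gb v (endLL φ a e) = tL φ a (endLToTensorSq yb gb v e) := by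
  simpa [endLToTensorSq, hv, endLL_eq_mul_rho] using (sum_ldualBasis_mul hyg
    (((mk φ).comp v).compl₂ (AddMonoidHom.mk' e.1 (map_add e.1)))
    (fun g b y => by simp [hv', mk_mul_map]) a).symm

theorem endLToTensorSq_tensorSqToEndL_mk (hyg : ∀ a, ∑ k, φ ((gb k).1 a) * yb k = a)
    (hv : ∀ g b, v (ldualR φ g b) = v g * φ b) (x y : A) :
    endLToTensorSq yb gb v (tensorSqToEndL φ u hu (mk φ x y)) = mk φ (v (u x)) y := by
  conv_rhs => rw [← ldual_eq_sum_ldualR hyg (u x)]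
  simp [endLToTensorSq, mk_mul_map, hv]

theorem tensorSqToEndL_endLToTensorSq (e : endL φ) :
    tensorSqToEndL φ u hu (endLToTensorSq yb gb v e) =
      ∑ k, rho φ (e.1 (yb k)) * ldualToEndL φ (u (v (gb k))) := by
  simp [endLToTensorSq]

end EndLTensorSq

section Dualize

variable {B A : Type} [Ring B] [Ring A] {φ : B →+* A}

variable (φ) in
def ldualFlip (u : A →+ ldualSub φ) (hu : ∀ x b, u (x * φ b) = ldualR φ (u x) b) :
    A →+ rdualSub φ :=
  ((ldualSub φ).subtype.comp u).flip.codRestrict _ fun a x b => by simp [hu]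

variable (φ) in
def rdualFlip (u : A →+ rdualSub φ) (hu : ∀ b x, u (φ b * x) = rdualL φ b (u x)) :
    A →+ ldualSub φ :=
  ((rdualSub φ).subtype.comp u).flip.codRestrict _ fun a b x => by simp [hu]

variable {ι κ : Type} [Fintype ι] [Fintype κ] {xb : ι → A} {hb : ι → rdualSub φ}
  {yb : κ → A} {gb : κ → ldualSub φ}

variable (yb gb) in
/-- The transpose of `v : (_BA)* → A`, read off in the dual basis `(yₖ, gₖ)` of `_BA`. -/
def rdualContract (v : ldualSub φ →+ A) : rdualSub φ →+ A where
  toFun h := ∑ k, φ (h.1 (v (gb k))) * yb k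
  map_zero' := by simp
  map_add' h h' := by simp [add_mul, Finset.sum_add_distrib]

variable (xb hb) in
/-- The transpose of `v : (A_B)* → A`, read off in the dual basis `(xⱼ, hⱼ)` of `A_B`. -/
def ldualContract (v : rdualSub φ →+ A) : ldualSub φ →+ A where
  toFun g := ∑ j, xb j * φ (g.1 (v (hb j)))
  map_zero' := by simp
  map_add' g g' := by simp [mul_add, Finset.sum_add_distrib]

section LeftToRight

variable {u : A →+ ldualSub φ} {hu : ∀ x b, u (x * φ b) = ldualR φ (u x) b}
  {v : ldualSub φ →+ A}

@[simp] theorem ldualFlip_apply (a z : A) : (ldualFlip φ u hu a).1 z = (u z).1 a := rfl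

theorem ldualFlip_mul_left (b : B) (a : A) :
    ldualFlip φ u hu (φ b * a) = rdualL φ b (ldualFlip φ u hu a) := by
  ext; simp

theorem ldualFlip_mul (hu' : ∀ a x, u (a * x) = ldualL φ a (u x)) (a a' : A) :
    ldualFlip φ u hu (a * a') = rdualR φ (ldualFlip φ u hu a) a' := by
  ext; simp [hu']

theorem rdualContract_rdualL (b : B) (h : rdualSub φ) :
    rdualContract yb gb v (rdualL φ b h) = φ b * rdualContract yb gb v h := by
  simp [rdualContract, Finset.mul_sum, mul_assoc]

theorem rdualContract_rdualR (hyg : ∀ a, ∑ k, φ ((gb k).1 a) * yb k = a)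
    (hv : ∀ a g, v (ldualL φ a g) = a * v g) (hv' : ∀ g b, v (ldualR φ g b) = v g * φ b)
    (h : rdualSub φ) (a : A) :
    rdualContract yb gb v (rdualR φ h a) = rdualContract yb gb v h * a := by
  simpa [rdualContract, ← hv, Finset.sum_mul, mul_assoc] using sum_ldualBasis_mul hyg
    (AddMonoidHom.mul.comp (φ.toAddMonoidHom.comp (h.1.comp v))) (fun g b y => by
      simp [hv', mul_assoc]) a

theorem ldualFlip_rdualContract (hyg : ∀ a, ∑ k, φ ((gb k).1 a) * yb k = a)
    (hv : ∀ g b, v (ldualR φ g b) = v g * φ b) (h : rdualSub φ) (z : A) :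
    (ldualFlip φ u hu (rdualContract yb gb v h)).1 z = h.1 (v (u z)) := by
  conv_rhs => rw [← ldual_eq_sum_ldualR hyg (u z)]
  simp [rdualContract, hv]

end LeftToRight

section RightToLeft

variable {u : A →+ rdualSub φ} {hu : ∀ b x, u (φ b * x) = rdualL φ b (u x)}
  {v : rdualSub φ →+ A}

@[simp] theorem rdualFlip_apply (a z : A) : (rdualFlip φ u hu a).1 z = (u z).1 a := rfl

theorem rdualFlip_mul (hu' : ∀ x a, u (x * a) = rdualR φ (u x) a) (a' a : A) :
    rdualFlip φ u hu (a' * a) = ldualL φ a' (rdualFlip φ u hu a) := by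
  ext; simp [hu']

theorem rdualFlip_mul_right (a : A) (b : B) :
    rdualFlip φ u hu (a * φ b) = ldualR φ (rdualFlip φ u hu a) b := by
  ext; simp

theorem ldualContract_ldualR (g : ldualSub φ) (b : B) :
    ldualContract xb hb v (ldualR φ g b) = ldualContract xb hb v g * φ b := by
  simp [ldualContract, Finset.sum_mul, mul_assoc]

theorem ldualContract_ldualL (hxh : ∀ a, ∑ j, xb j * φ ((hb j).1 a) = a)
    (hv : ∀ b h, v (rdualL φ b h) = φ b * v h) (hv' : ∀ h a, v (rdualR φ h a) = v h * a)
    (a : A) (g : ldualSub φ) :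
    ldualContract xb hb v (ldualL φ a g) = a * ldualContract xb hb v g := by
  simpa [ldualContract, ← hv', Finset.mul_sum, mul_assoc] using (sum_mul_rdualBasis hxh
    (AddMonoidHom.mul.compl₂ (φ.toAddMonoidHom.comp (g.1.comp v))) (fun x b h => by
      simp [hv, mul_assoc]) a).symm

theorem rdualFlip_ldualContract (hxh : ∀ a, ∑ j, xb j * φ ((hb j).1 a) = a)
    (hv : ∀ b h, v (rdualL φ b h) = φ b * v h) (g : ldualSub φ) (z : A) :
    (rdualFlip φ u hu (ldualContract xb hb v g)).1 z = g.1 (v (u z)) := by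
  conv_rhs => rw [← rdual_eq_sum_rdualL hxh (u z)]
  simp [ldualContract, hv]

end RightToLeft

end Dualize

section Similarity

open TensorSq

variable {B A : Type} [Ring B] [Ring A] {φ : B →+* A}
  {ι κ : Type} [Fintype ι] [Fintype κ] {xb : ι → A} {hb : ι → rdualSub φ}
  {yb : κ → A} {gb : κ → ldualSub φ}

theorem BDiv.rdual_of_ldual (hyg : ∀ a, ∑ k, φ ((gb k).1 a) * yb k = a)
    (h : BDiv A B (fun a x => a * x) (fun x b => x * φ b) (ldualL φ) (ldualR φ)) :
    BDiv B A (rdualL φ) (rdualR φ) (fun b x => φ b * x) (fun x a => x * a) := by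
  obtain ⟨n, u, v, hu, hv, hvu⟩ := h.exists_sum (ldualL_zero φ) (ldualR_zero φ)
  refine BDiv.of_sum (rdualL_add φ) (rdualR_add φ) (fun i => rdualContract yb gb (v i))
    (fun i => ldualFlip φ (u i) (hu i).2)
    (fun i => ⟨rdualContract_rdualL, rdualContract_rdualR hyg (hv i).1 (hv i).2⟩)
    (fun i => ⟨ldualFlip_mul_left, ldualFlip_mul (hu i).1⟩) fun h => ?_
  ext z
  simp [ldualFlip_rdualContract hyg (hv _).2, ← map_sum, hvu]

theorem BDiv.ldual_of_rdual (hxh : ∀ a, ∑ j, xb j * φ ((hb j).1 a) = a)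
    (h : BDiv B A (fun b x => φ b * x) (fun x a => x * a) (rdualL φ) (rdualR φ)) :
    BDiv A B (ldualL φ) (ldualR φ) (fun a x => a * x) (fun x b => x * φ b) := by
  obtain ⟨n, u, v, hu, hv, hvu⟩ := h.exists_sum (rdualL_zero φ) (rdualR_zero φ)
  refine BDiv.of_sum (ldualL_add φ) (ldualR_add φ) (fun i => ldualContract xb hb (v i))
    (fun i => rdualFlip φ (u i) (hu i).1)
    (fun i => ⟨ldualContract_ldualL hxh (hv i).1 (hv i).2, ldualContract_ldualR⟩)
    (fun i => ⟨rdualFlip_mul (hu i).2, rdualFlip_mul_right⟩) fun g => ?_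
  ext z
  simp [rdualFlip_ldualContract hxh (hv _).1, ← map_sum, hvu]

theorem BDiv.tensorSq_endR (hxh : ∀ a, ∑ j, xb j * φ ((hb j).1 a) = a)
    (h : BDiv B A (fun b x => φ b * x) (fun x a => x * a) (rdualL φ) (rdualR φ)) :
    BDiv (endR φ) A (fun e t => endRTmulL φ e t) (fun t a => tR φ a t)
      (fun e f => e * f) (fun f a => f * lam φ a) := by
  obtain ⟨n, u, v, hu, hv, hvu⟩ := h.exists_sum (rdualL_zero φ) (rdualR_zero φ)
  refine BDiv.of_sum (fun e => map_add (endRTmulL φ e)) (fun s t a => map_add (tR φ a) s t)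
    (fun i => tensorSqToEndR φ (u i) (hu i).1) (fun i => endRToTensorSq xb hb (v i))
    (fun i => ⟨tensorSqToEndR_endRTmulL, tensorSqToEndR_tR (hu i).2⟩)
    (fun i => ⟨endRToTensorSq_mul, endRToTensorSq_mul_lam hxh (hv i).1 (hv i).2⟩) fun t => ?_
  induction t using TensorSq.induction_on with
  | zero => simp
  | mk x y => simp only [endRToTensorSq_tensorSqToEndR_mk hxh (hv _).1, ← map_sum, hvu]
  | add s t hs ht => simp only [map_add, Finset.sum_add_distrib, hs, ht]

theorem BDiv.endR_tensorSq (hxh : ∀ a, ∑ j, xb j * φ ((hb j).1 a) = a)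
    (h : BDiv B A (rdualL φ) (rdualR φ) (fun b x => φ b * x) (fun x a => x * a)) :
    BDiv (endR φ) A (fun e f => e * f) (fun f a => f * lam φ a)
      (fun e t => endRTmulL φ e t) (fun t a => tR φ a t) := by
  obtain ⟨n, v, u, hv, hu, huv⟩ := h.exists_sum (fun b => mul_zero (φ b)) zero_mul
  refine BDiv.of_sum mul_add (fun f f' a => add_mul f f' (lam φ a))
    (fun i => endRToTensorSq xb hb (v i)) (fun i => tensorSqToEndR φ (u i) (hu i).1)
    (fun i => ⟨endRToTensorSq_mul, endRToTensorSq_mul_lam hxh (hv i).1 (hv i).2⟩)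
    (fun i => ⟨tensorSqToEndR_endRTmulL, tensorSqToEndR_tR (hu i).2⟩) fun e => ?_
  simp only [tensorSqToEndR_endRToTensorSq]
  rw [Finset.sum_comm]
  simp only [← Finset.mul_sum, ← map_sum, huv, endR_eq_sum_lam_mul hxh]

theorem BDiv.tensorSq_endL (hyg : ∀ a, ∑ k, φ ((gb k).1 a) * yb k = a)
    (h : BDiv A B (fun a x => a * x) (fun x b => x * φ b) (ldualL φ) (ldualR φ)) :
    BDiv A A (fun a t => tL φ a t) (fun t a => tR φ a t)
      (fun x f => endLL φ x f) (fun f y => endLR φ f y) := by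
  obtain ⟨n, u, v, hu, hv, hvu⟩ := h.exists_sum (ldualL_zero φ) (ldualR_zero φ)
  refine BDiv.of_sum (fun a => map_add (tL φ a)) (fun s t a => map_add (tR φ a) s t)
    (fun i => tensorSqToEndL φ (u i) (hu i).2) (fun i => endLToTensorSq yb gb (v i))
    (fun i => ⟨tensorSqToEndL_tL (hu i).1, tensorSqToEndL_tR⟩)
    (fun i => ⟨endLToTensorSq_endLL hyg (hv i).1 (hv i).2, endLToTensorSq_endLR⟩) fun t => ?_
  induction t using TensorSq.induction_on with
  | zero => simp
  | mk x y =>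
    simp only [endLToTensorSq_tensorSqToEndL_mk hyg (hv _).2, ← AddMonoidHom.finsetSum_apply,
      ← map_sum, hvu]
  | add s t hs ht => simp only [map_add, Finset.sum_add_distrib, hs, ht]

theorem BDiv.endL_tensorSq (hyg : ∀ a, ∑ k, φ ((gb k).1 a) * yb k = a)
    (h : BDiv A B (ldualL φ) (ldualR φ) (fun a x => a * x) (fun x b => x * φ b)) :
    BDiv A A (fun x f => endLL φ x f) (fun f y => endLR φ f y)
      (fun a t => tL φ a t) (fun t a => tR φ a t) := by
  obtain ⟨n, v, u, hv, hu, huv⟩ := h.exists_sum (fun a => mul_zero a) (fun b => zero_mul (φ b))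
  refine BDiv.of_sum (fun x f f' => add_mul f f' (rho φ x)) (fun f f' y => mul_add (rho φ y) f f')
    (fun i => endLToTensorSq yb gb (v i)) (fun i => tensorSqToEndL φ (u i) (hu i).2)
    (fun i => ⟨endLToTensorSq_endLL hyg (hv i).1 (hv i).2, endLToTensorSq_endLR⟩)
    (fun i => ⟨tensorSqToEndL_tL (hu i).1, tensorSqToEndL_tR⟩) fun e => ?_
  simp only [tensorSqToEndL_endLToTensorSq]
  rw [Finset.sum_comm]
  simp only [← Finset.mul_sum, ← map_sum, huv, endL_eq_sum_rho_mul hyg]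

end Similarity

/-- If `A/B` is a QF ring extension, then the natural `(A,A)`-bimodules `End(_B A)`,
`A ⊗_B A` and `End(A_B)` are pairwise similar; moreover `A ⊗_B A ∼ End(A_B)` as
`(E,A)`-bimodules where `E = End(A_B)`. -/
theorem qf_tensorSquare_similarities {B A : Type} [Ring B] [Ring A] (φ : B →+* A)
    (hqf : IsQFExt φ) :
    BSim A A (fun x f => endLL φ x f) (fun f y => endLR φ f y)
      (fun a t => tL φ a t) (fun t a => tR φ a t) ∧
    BSim A A (fun a t => tL φ a t) (fun t a => tR φ a t)
      (fun a e => lam φ a * e) (fun e a => e * lam φ a) ∧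
    BSim A A (fun x f => endLL φ x f) (fun f y => endLR φ f y)
      (fun a e => lam φ a * e) (fun e a => e * lam φ a) ∧
    BSim (↥(endR φ)) A (fun e t => endRTmulL φ e t) (fun t a => tR φ a t)
      (fun e f => e * f) (fun f a => f * lam φ a) := by
  obtain ⟨⟨hlproj, hldiv⟩, hrproj, hrdiv⟩ := hqf
  obtain ⟨_, xb, hb, hxh⟩ := exists_rdualBasis φ hrproj
  obtain ⟨_, yb, gb, hyg⟩ := exists_ldualBasis φ hlproj
  have hTE := hrdiv.tensorSq_endR hxh
  have hET := (hldiv.rdual_of_ldual hyg).endR_tensorSq hxh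
  have hTL := hldiv.tensorSq_endL hyg
  have hLT := (hrdiv.ldual_of_rdual hxh).endL_tensorSq hyg
  have hTE' := hTE.restrictLeft (lam φ) (fun a t => (endRTmulL_lam a t).symm) fun _ _ => rfl
  have hET' := hET.restrictLeft (lam φ) (fun _ _ => rfl) fun a t => (endRTmulL_lam a t).symm
  exact ⟨⟨hLT, hTL⟩, ⟨hTE', hET'⟩, ⟨hLT.trans hTE', hET'.trans hTL⟩, hTE, hET⟩
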